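/- For any x > 0, the identity -Σ_{m=1}^{∞} ψ'(mx+1)/m² + Σ_{m=1}^{∞} ψ'(m/x + 1)/m² + (2/x) Σ_{m=1}^{∞} (γ + ψ(mx+1))/m³ = ζ(2)² holds. -/
import Mathlib

open Real
set_option maxHeartbeats 1000000

/-- The digamma function, via the series `ψ(z) = -γ + ∑_{n≥0} (1/(n+1) - 1/(n+z))`. -/
noncomputable def digamma (z : ℝ) : ℝ :=
  -Real.eulerMascheroniConstant + ∑' n : ℕ, (1 / ((n : ℝ) + 1) - 1 / ((n : ℝ) + z))
/-- The `j`-th derivative of digamma (for `j ≥ 1`):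
`ψ^{(j)}(z) = (-1)^{j+1} j! ∑_{ℓ≥0} 1/(ℓ+z)^{j+1}`. -/
noncomputable def psiDeriv (j : ℕ) (z : ℝ) : ℝ :=
  (-1) ^ (j + 1) * (j.factorial : ℝ) * ∑' ℓ : ℕ, 1 / (((ℓ : ℝ) + z) ^ (j + 1))
/-- The Riemann zeta function at a real argument. -/
noncomputable def rzeta (x : ℝ) : ℝ := (riemannZeta x).re

namespace MFEaux

lemma psiDeriv_one (z : ℝ) : psiDeriv 1 z = ∑' ℓ : ℕ, 1 / (((ℓ : ℝ) + z) ^ 2) := by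
  norm_num [psiDeriv]

/-- first double-sum term -/
noncomputable def AA (x : ℝ) (p : ℕ × ℕ) : ℝ :=
  1 / (((p.2 : ℝ) + (((p.1 : ℝ) + 1) * x + 1)) ^ 2) / ((p.1 : ℝ) + 1) ^ 2

/-- second double-sum term -/
noncomputable def BB (x : ℝ) (p : ℕ × ℕ) : ℝ :=
  1 / (((p.2 : ℝ) + (((p.1 : ℝ) + 1) / x + 1)) ^ 2) / ((p.1 : ℝ) + 1) ^ 2

/-- third double-sum term, before the 2/x factor -/
noncomputable def GG (x : ℝ) (p : ℕ × ℕ) : ℝ :=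
  (((p.1 : ℝ) + 1) * x) / ((((p.2 : ℝ) + 1)) * (((p.2 : ℝ) + 1) + ((p.1 : ℝ) + 1) * x))
    / ((p.1 : ℝ) + 1) ^ 3

lemma bound_aux {a b c : ℝ} (ha : 0 < a) (hab : a ≤ b) (hc : 0 < c) :
    1 / b ^ 2 / c ^ 2 ≤ 1 / c ^ 2 * (1 / a ^ 2) := by
  have h1 : 1 / b ^ 2 ≤ 1 / a ^ 2 :=
    one_div_le_one_div_of_le (by positivity) (by nlinarith)
  calc 1 / b ^ 2 / c ^ 2 = 1 / c ^ 2 * (1 / b ^ 2) := by ring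
    _ ≤ 1 / c ^ 2 * (1 / a ^ 2) := mul_le_mul_of_nonneg_left h1 (by positivity)

lemma summable_base : Summable (fun n : ℕ => 1 / ((n : ℝ) + 1) ^ 2) := by
  have h0 : Summable (fun n : ℕ => 1 / (n : ℝ) ^ 2) :=
    summable_one_div_nat_pow.mpr (by norm_num)
  exact ((summable_nat_add_iff (f := fun n : ℕ => 1 / (n : ℝ) ^ 2) 1).mpr h0).congr
    (fun n => by push_cast; ring)

lemma summable_prod :
    Summable (fun p : ℕ × ℕ => 1 / ((p.1 : ℝ) + 1) ^ 2 * (1 / ((p.2 : ℝ) + 1) ^ 2)) :=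
  summable_base.mul_of_nonneg summable_base (fun n => by positivity) (fun n => by positivity)

lemma summable_AA {x : ℝ} (hx : 0 < x) : Summable (AA x) := by
  refine Summable.of_nonneg_of_le (fun p => by unfold AA; positivity) (fun p => ?_) summable_prod
  have hM0 : (0:ℝ) < (p.1 : ℝ) + 1 := by positivity
  have hN0 : (0:ℝ) < (p.2 : ℝ) + 1 := by positivity
  have hd : (p.2 : ℝ) + 1 ≤ (p.2 : ℝ) + (((p.1 : ℝ) + 1) * x + 1) := by nlinarith
  exact bound_aux hN0 hd hM0

lemma summable_BB {x : ℝ} (hx : 0 < x) : Summable (BB x) := by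
  refine Summable.of_nonneg_of_le (fun p => by unfold BB; positivity) (fun p => ?_) summable_prod
  have hM0 : (0:ℝ) < (p.1 : ℝ) + 1 := by positivity
  have hN0 : (0:ℝ) < (p.2 : ℝ) + 1 := by positivity
  have hdiv : (0:ℝ) < ((p.1 : ℝ) + 1) / x := by positivity
  have hd : (p.2 : ℝ) + 1 ≤ (p.2 : ℝ) + (((p.1 : ℝ) + 1) / x + 1) := by linarith
  exact bound_aux hN0 hd hM0

lemma summable_GG {x : ℝ} (hx : 0 < x) : Summable (GG x) := by
  refine Summable.of_nonneg_of_le (fun p => by unfold GG; positivity) (fun p => ?_)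
    (summable_prod.mul_left x)
  set M : ℝ := (p.1 : ℝ) + 1 with hM
  set N : ℝ := (p.2 : ℝ) + 1 with hN
  have hM0 : 0 < M := by positivity
  have hN0 : 0 < N := by positivity
  have hd : N ^ 2 ≤ N * (N + M * x) := by nlinarith [mul_pos hN0 (mul_pos hM0 hx)]
  have h1 : 1 / (N * (N + M * x)) ≤ 1 / N ^ 2 :=
    one_div_le_one_div_of_le (by positivity) hd
  calc GG x p = M * x * (1 / (N * (N + M * x))) * (1 / M ^ 3) := by rw [GG]; ring
    _ ≤ M * x * (1 / N ^ 2) * (1 / M ^ 3) :=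
        mul_le_mul_of_nonneg_right
          (mul_le_mul_of_nonneg_left h1 (by positivity)) (by positivity)
    _ = x * (1 / M ^ 2 * (1 / N ^ 2)) := by
        have h2 : M ≠ 0 := hM0.ne'
        have h3 : N ≠ 0 := hN0.ne'
        field_simp

lemma gamma_digamma (y : ℝ) (hy : 0 < y) :
    Real.eulerMascheroniConstant + digamma (y + 1)
      = ∑' n : ℕ, y / (((n : ℝ) + 1) * (((n : ℝ) + 1) + y)) := by
  rw [digamma, add_neg_cancel_left]
  refine tsum_congr fun n => ?_
  have h1 : (0 : ℝ) < (n : ℝ) + 1 := by positivity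
  have h2 : (0 : ℝ) < (n : ℝ) + (y + 1) := by positivity
  have h3 : (0 : ℝ) < (n : ℝ) + 1 + y := by positivity
  rw [div_sub_div _ _ h1.ne' h2.ne', div_eq_div_iff (by positivity) (by positivity)]
  ring

end MFEaux

open MFEaux in
theorem mixed_functional_equation_example (x : ℝ) (hx : 0 < x) :
    -(∑' m : ℕ, psiDeriv 1 (((m : ℝ) + 1) * x + 1) / ((m : ℝ) + 1) ^ 2)
      + (∑' m : ℕ, psiDeriv 1 (((m : ℝ) + 1) / x + 1) / ((m : ℝ) + 1) ^ 2)
      + (2 / x) * ∑' m : ℕ,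
          (Real.eulerMascheroniConstant + digamma (((m : ℝ) + 1) * x + 1)) / ((m : ℝ) + 1) ^ 3
    = (rzeta 2) ^ 2 := by
  have hx' : x ≠ 0 := hx.ne'
  have hA := summable_AA hx
  have hB := summable_BB hx
  have hG := summable_GG hx
  -- Term 1
  have hT1 : (∑' m : ℕ, psiDeriv 1 (((m : ℝ) + 1) * x + 1) / ((m : ℝ) + 1) ^ 2)
      = ∑' p : ℕ × ℕ, AA x p := by
    rw [Summable.tsum_prod hA]
    refine tsum_congr fun m => ?_
    rw [psiDeriv_one]
    exact tsum_div_const.symm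
  -- Term 2
  have hT2 : (∑' m : ℕ, psiDeriv 1 (((m : ℝ) + 1) / x + 1) / ((m : ℝ) + 1) ^ 2)
      = ∑' p : ℕ × ℕ, BB x (p.2, p.1) := by
    have hswap : ∑' p : ℕ × ℕ, BB x (p.2, p.1) = ∑' p : ℕ × ℕ, BB x p :=
      (Equiv.prodComm ℕ ℕ).tsum_eq (BB x)
    rw [hswap, Summable.tsum_prod hB]
    refine tsum_congr fun m => ?_
    rw [psiDeriv_one]
    exact tsum_div_const.symm
  -- Term 3
  have hT3 : (2 / x) * (∑' m : ℕ,
      (Real.eulerMascheroniConstant + digamma (((m : ℝ) + 1) * x + 1)) / ((m : ℝ) + 1) ^ 3)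
      = ∑' p : ℕ × ℕ, (2 / x) * GG x p := by
    have h1 : (∑' m : ℕ,
        (Real.eulerMascheroniConstant + digamma (((m : ℝ) + 1) * x + 1)) / ((m : ℝ) + 1) ^ 3)
        = ∑' p : ℕ × ℕ, GG x p := by
      rw [Summable.tsum_prod hG]
      refine tsum_congr fun m => ?_
      have hy : 0 < ((m : ℝ) + 1) * x := by positivity
      rw [gamma_digamma _ hy]
      exact tsum_div_const.symm
    rw [h1, ← tsum_mul_left]
  have hB2 : Summable (fun p : ℕ × ℕ => BB x (p.2, p.1)) :=
    ((Equiv.prodComm ℕ ℕ).summable_iff.mpr hB).congr fun p => rfl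
  rw [hT1, hT2, hT3, ← tsum_neg, ← Summable.tsum_add hA.neg hB2,
    ← Summable.tsum_add (hA.neg.add hB2) (hG.mul_left (2 / x))]
  have hmain : ∀ p : ℕ × ℕ, -AA x p + BB x (p.2, p.1) + 2 / x * GG x p
      = 1 / ((p.1 : ℝ) + 1) ^ 2 * (1 / ((p.2 : ℝ) + 1) ^ 2) := by
    intro p
    have hM0 : (0 : ℝ) < (p.1 : ℝ) + 1 := by positivity
    have hN0 : (0 : ℝ) < (p.2 : ℝ) + 1 := by positivity
    have hd1 : (0 : ℝ) < (p.2 : ℝ) + (((p.1 : ℝ) + 1) * x + 1) := by positivity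
    have hd2 : (0 : ℝ) < (p.1 : ℝ) + (((p.2 : ℝ) + 1) / x + 1) := by positivity
    have hd3 : (0 : ℝ) < ((p.2 : ℝ) + 1) + ((p.1 : ℝ) + 1) * x := by positivity
    rw [AA, BB, GG]
    field_simp
    ring
  rw [tsum_congr hmain, Summable.tsum_prod summable_prod]
  have hzeta : ∑' n : ℕ, 1 / ((n : ℝ) + 1) ^ 2 = π ^ 2 / 6 := by
    have h := hasSum_zeta_two.tsum_eq
    rw [Summable.tsum_eq_zero_add hasSum_zeta_two.summable] at h
    simp only [Nat.cast_zero] at h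
    rw [← h]
    norm_num
  have : ∑' (m : ℕ), ∑' (n : ℕ), 1 / ((m : ℝ) + 1) ^ 2 * (1 / ((n : ℝ) + 1) ^ 2)
      = (π ^ 2 / 6) ^ 2 := by
    calc ∑' (m : ℕ), ∑' (n : ℕ), 1 / ((m : ℝ) + 1) ^ 2 * (1 / ((n : ℝ) + 1) ^ 2)
        = ∑' (m : ℕ), 1 / ((m : ℝ) + 1) ^ 2 * (π ^ 2 / 6) := by
          exact tsum_congr fun m => by rw [tsum_mul_left, hzeta]
      _ = (π ^ 2 / 6) * (π ^ 2 / 6) := by rw [tsum_mul_right, hzeta]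
      _ = (π ^ 2 / 6) ^ 2 := by ring
  rw [this]
  have : rzeta 2 = π ^ 2 / 6 := by
    rw [rzeta]
    rw [show ((2 : ℝ) : ℂ) = (2 : ℂ) by norm_num, riemannZeta_two,
      show ((π : ℂ) ^ 2 / 6) = ((π ^ 2 / 6 : ℝ) : ℂ) by push_cast; ring, Complex.ofReal_re]
  rw [this]
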